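/- arXiv:1410.1570 — 2 statements merged into one kernel-verified Lean document; each statement's English description precedes it below -/
import Mathlib

section
/- For every integer n ≥ 3 and every real α with 0 < α < 1, the sum over j from 2 to n-1 of binom(n,j) · (j-1)^((j-1)/α) · (n-j)^((n-j)/α) is at most (e/(1/α - 1)) · (3/2)^(1/α - 1) · n · (n-1)^((n-1)/α). -/
/-!
Write a term as `j = a + 1`, `n = a + b + 1`. Then `binom(n, j) ≤ n · binom(a + b, a)` and
`a^(a/α) b^(b/α) = P^(1/α)` with `P = a^a b^b`. The binomial theorem gives
`binom(a + b, a) · P ≤ (a + b)^(a + b)`, while `1 - t ≤ e^(-t)` gives the finer estimate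
`P ≤ (a + b)^(a + b) e^(-min(a, b))`. Spending the first bound on one factor `P` and the second on
`P^(1/α - 1)` bounds the term by `n (n - 1)^((n - 1)/α) (y^a + y^b)` with `y = e^(-(1/α - 1))`,
and the geometric series contributes `2y/(1 - y) ≤ 2/(1/α - 1) ≤ e/(1/α - 1)`.
-/

open Finset Real

theorem choose_mul_pow_mul_pow_le_add_pow {x y : ℝ} (hx : 0 ≤ x) (hy : 0 ≤ y) (a b : ℕ) :
    ((a + b).choose a : ℝ) * (x ^ a * y ^ b) ≤ (x + y) ^ (a + b) := by
  rw [add_pow]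
  calc ((a + b).choose a : ℝ) * (x ^ a * y ^ b) = x ^ a * y ^ (a + b - a) * (a + b).choose a := by
        rw [Nat.add_sub_cancel_left]; ring
    _ ≤ _ := single_le_sum (f := fun k => x ^ k * y ^ (a + b - k) * ((a + b).choose k : ℝ))
        (fun k _ => by positivity) (mem_range.2 (by omega))

theorem le_mul_exp_neg_sub_div {x s : ℝ} (hs : 0 < s) : x ≤ s * exp (-((s - x) / s)) := by
  calc x = s * (-((s - x) / s) + 1) := by field_simp; ring
    _ ≤ s * exp (-((s - x) / s)) := by gcongr; exact add_one_le_exp _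

theorem pow_mul_pow_le_add_pow_mul_exp_neg_min (a b : ℕ) :
    (a : ℝ) ^ a * (b : ℝ) ^ b ≤ ((a : ℝ) + b) ^ (a + b) * exp (-min (a : ℝ) b) := by
  rcases Nat.eq_zero_or_pos (a + b) with hab | hab
  · obtain ⟨rfl, rfl⟩ : a = 0 ∧ b = 0 := by omega
    simp
  set s : ℝ := a + b
  have hs : 0 < s := by simpa [s] using (Nat.cast_pos.2 hab : (0 : ℝ) < (a + b : ℕ))
  have ha : (a : ℝ) ≤ s * exp (-(b / s)) := by
    simpa [s] using le_mul_exp_neg_sub_div (x := a) hs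
  have hb : (b : ℝ) ≤ s * exp (-(a / s)) := by
    simpa [s] using le_mul_exp_neg_sub_div (x := b) hs
  have hmin : min (a : ℝ) b ≤ 2 * a * b / s := by
    rw [le_div_iff₀ hs]
    rcases le_total (a : ℝ) b with h | h
    · rw [min_eq_left h]; nlinarith [(Nat.cast_nonneg a : (0 : ℝ) ≤ a)]
    · rw [min_eq_right h]; nlinarith [(Nat.cast_nonneg b : (0 : ℝ) ≤ b)]
  calc (a : ℝ) ^ a * (b : ℝ) ^ b ≤ (s * exp (-(b / s))) ^ a * (s * exp (-(a / s))) ^ b := by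
        gcongr
    _ = s ^ (a + b) * exp (-(2 * a * b / s)) := by
        rw [mul_pow, mul_pow, ← exp_nat_mul, ← exp_nat_mul, pow_add, mul_mul_mul_comm, ← exp_add]
        congr 2
        ring
    _ ≤ s ^ (a + b) * exp (-min (a : ℝ) b) := by gcongr

theorem mul_rpow_le_rpow_mul_rpow_sub_one {K P Q ε p : ℝ} (hP : 0 ≤ P) (hQ : 0 ≤ Q) (hε : 0 ≤ ε)
    (hp : 1 ≤ p) (hKP : K * P ≤ Q) (hPQ : P ≤ Q * ε) : K * P ^ p ≤ Q ^ p * ε ^ (p - 1) := by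
  have hsplit : ∀ x : ℝ, 0 ≤ x → x ^ p = x * x ^ (p - 1) := fun x hx => by
    conv_lhs => rw [show p = 1 + (p - 1) by ring]
    rw [rpow_add' hx (by linarith), rpow_one]
  calc K * P ^ p = K * P * P ^ (p - 1) := by rw [hsplit P hP, mul_assoc]
    _ ≤ Q * (Q * ε) ^ (p - 1) := by gcongr
    _ = Q ^ p * ε ^ (p - 1) := by rw [mul_rpow hQ hε, hsplit Q hQ, mul_assoc]

theorem exp_neg_min_rpow_le (a b : ℕ) (γ : ℝ) :
    exp (-min (a : ℝ) b) ^ γ ≤ exp (-γ) ^ a + exp (-γ) ^ b := by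
  have h : ∀ k : ℕ, exp (-(k : ℝ)) ^ γ = exp (-γ) ^ k := fun k => by
    rw [← exp_mul, ← exp_nat_mul]; ring_nf
  rcases le_total (a : ℝ) b with hab | hab
  · rw [min_eq_left hab, h]; exact le_add_of_nonneg_right (by positivity)
  · rw [min_eq_right hab, h]; exact le_add_of_nonneg_left (by positivity)

theorem sum_pow_le_div_one_sub {ι : Type*} {s : Finset ι} {f : ι → ℕ} (hf : Set.InjOn f s)
    (hf1 : ∀ i ∈ s, 1 ≤ f i) {y : ℝ} (hy0 : 0 ≤ y) (hy1 : y < 1) :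
    ∑ i ∈ s, y ^ f i ≤ y / (1 - y) := by
  obtain ⟨N, hN⟩ := (s.image f).exists_nat_subset_range
  rw [← sum_image hf]
  calc ∑ k ∈ s.image f, y ^ k ≤ ∑ k ∈ Ico 1 N, y ^ k := by
        refine sum_le_sum_of_subset_of_nonneg (fun k hk => ?_) (fun k _ _ => by positivity)
        obtain ⟨i, hi, rfl⟩ := mem_image.1 hk
        exact mem_Ico.2 ⟨hf1 i hi, mem_range.1 (hN hk)⟩
    _ ≤ y / (1 - y) := by simpa using geom_sum_Ico_le_of_lt_one (m := 1) (n := N) hy0 hy1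

theorem exp_neg_div_one_sub_exp_neg_le {γ : ℝ} (hγ : 0 < γ) :
    exp (-γ) / (1 - exp (-γ)) ≤ 1 / γ := by
  have h1 : exp (-γ) < 1 := exp_lt_one_iff.2 (by linarith)
  rw [div_le_div_iff₀ (by linarith) hγ]
  have h2 : exp (-γ) * exp γ = 1 := by rw [← exp_add]; simp
  nlinarith [add_one_le_exp γ, exp_pos (-γ)]

theorem choose_mul_rpow_mul_rpow_le (a b : ℕ) {α : ℝ} (hα0 : 0 < α) (hα1 : α ≤ 1) :
    ((a + b + 1).choose (a + 1) : ℝ) * (a : ℝ) ^ ((a : ℝ) / α) * (b : ℝ) ^ ((b : ℝ) / α)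
      ≤ ((a + b + 1 : ℕ) : ℝ) * ((a : ℝ) + b) ^ (((a : ℝ) + b) / α) *
        (exp (-(1 / α - 1)) ^ a + exp (-(1 / α - 1)) ^ b) := by
  have hp : 1 ≤ 1 / α := by rw [le_div_iff₀ hα0]; linarith
  have hrpow : ∀ x : ℕ, (x : ℝ) ^ ((x : ℝ) / α) = ((x : ℝ) ^ x) ^ (1 / α) := fun x => by
    rw [div_eq_mul_one_div, rpow_natCast_mul (Nat.cast_nonneg x)]
  have hrpow_add : ((a : ℝ) + b) ^ (((a : ℝ) + b) / α) = (((a : ℝ) + b) ^ (a + b)) ^ (1 / α) := by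
    simpa using hrpow (a + b)
  have hchoose : ((a + b + 1).choose (a + 1) : ℝ) ≤ ((a + b + 1 : ℕ) : ℝ) * (a + b).choose a := by
    have h := Nat.add_one_mul_choose_eq (a + b) a
    exact_mod_cast h ▸ Nat.le_mul_of_pos_right _ (Nat.succ_pos a)
  have key := mul_rpow_le_rpow_mul_rpow_sub_one (K := ((a + b).choose a : ℝ)) (by positivity)
    (by positivity) (exp_pos _).le hp (choose_mul_pow_mul_pow_le_add_pow (Nat.cast_nonneg a)
      (Nat.cast_nonneg b) a b) (pow_mul_pow_le_add_pow_mul_exp_neg_min a b)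
  calc ((a + b + 1).choose (a + 1) : ℝ) * (a : ℝ) ^ ((a : ℝ) / α) * (b : ℝ) ^ ((b : ℝ) / α)
      = ((a + b + 1).choose (a + 1) : ℝ) * ((a : ℝ) ^ a * (b : ℝ) ^ b) ^ (1 / α) := by
        rw [hrpow a, hrpow b, mul_assoc, mul_rpow (by positivity) (by positivity)]
    _ ≤ ((a + b + 1 : ℕ) : ℝ) * ((a + b).choose a * ((a : ℝ) ^ a * (b : ℝ) ^ b) ^ (1 / α)) := by
        rw [← mul_assoc]; gcongr
    _ ≤ ((a + b + 1 : ℕ) : ℝ) * ((((a : ℝ) + b) ^ (a + b)) ^ (1 / α) *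
          exp (-min (a : ℝ) b) ^ (1 / α - 1)) := by gcongr
    _ ≤ _ := by
        rw [hrpow_add, mul_assoc]
        gcongr
        exact exp_neg_min_rpow_le a b _

theorem choose_mul_rpow_sub_one_mul_rpow_sub_le {n j : ℕ} (hj : 1 ≤ j) (hjn : j < n) {α : ℝ}
    (hα0 : 0 < α) (hα1 : α ≤ 1) :
    (n.choose j : ℝ) * ((j : ℝ) - 1) ^ (((j : ℝ) - 1) / α) *
        ((n : ℝ) - j) ^ (((n : ℝ) - j) / α)
      ≤ n * ((n : ℝ) - 1) ^ (((n : ℝ) - 1) / α) *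
        (exp (-(1 / α - 1)) ^ (j - 1) + exp (-(1 / α - 1)) ^ (n - j)) := by
  obtain ⟨a, rfl⟩ : ∃ a, j = a + 1 := ⟨j - 1, by omega⟩
  obtain ⟨b, rfl⟩ : ∃ b, n = a + b + 1 := ⟨n - a - 1, by omega⟩
  have ha : ((a + 1 : ℕ) : ℝ) - 1 = a := by push_cast; ring
  have hb : ((a + b + 1 : ℕ) : ℝ) - ((a + 1 : ℕ) : ℝ) = b := by push_cast; ring
  have hab : ((a + b + 1 : ℕ) : ℝ) - 1 = a + b := by push_cast; ring
  rw [ha, hb, hab, show a + 1 - 1 = a by omega, show a + b + 1 - (a + 1) = b by omega]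
  exact choose_mul_rpow_mul_rpow_le a b hα0 hα1

theorem sum_Icc_pow_sub_one_add_pow_sub_le (n : ℕ) {y : ℝ} (hy0 : 0 ≤ y) (hy1 : y < 1) :
    ∑ j ∈ Icc 2 (n - 1), (y ^ (j - 1) + y ^ (n - j)) ≤ 2 * (y / (1 - y)) := by
  rw [sum_add_distrib, two_mul]
  refine add_le_add (sum_pow_le_div_one_sub ?_ ?_ hy0 hy1) (sum_pow_le_div_one_sub ?_ ?_ hy0 hy1)
  all_goals
    intro i hi
    try intro j hj h
    simp only [coe_Icc, Set.mem_Icc, mem_Icc] at *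
    omega

theorem stmt_0 (n : ℕ) (hn : 3 ≤ n) (α : ℝ) (hα0 : 0 < α) (hα1 : α < 1) :
    ∑ j ∈ Finset.Icc 2 (n - 1),
        (n.choose j : ℝ) * ((j : ℝ) - 1) ^ (((j : ℝ) - 1) / α) *
          ((n : ℝ) - (j : ℝ)) ^ (((n : ℝ) - (j : ℝ)) / α)
      ≤ (Real.exp 1 / (1 / α - 1)) * (3 / 2 : ℝ) ^ (1 / α - 1) * (n : ℝ) *
          ((n : ℝ) - 1) ^ (((n : ℝ) - 1) / α) := by
  have hγ : 0 < 1 / α - 1 := by rw [sub_pos, lt_div_iff₀ hα0]; linarith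
  set y := exp (-(1 / α - 1))
  set M := ((n : ℝ) - 1) ^ (((n : ℝ) - 1) / α)
  have hM : 0 ≤ M := rpow_nonneg (sub_nonneg.2 (by exact_mod_cast (by omega : 1 ≤ n))) _
  calc _ ≤ ∑ j ∈ Icc 2 (n - 1), n * M * (y ^ (j - 1) + y ^ (n - j)) :=
        sum_le_sum fun j hj => choose_mul_rpow_sub_one_mul_rpow_sub_le (by grind)
          (by grind) hα0 hα1.le
    _ ≤ n * M * (2 * (y / (1 - y))) := by
        rw [← mul_sum]
        gcongr
        exact sum_Icc_pow_sub_one_add_pow_sub_le n (exp_pos _).le (exp_lt_one_iff.2 (by linarith))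
    _ ≤ n * M * (exp 1 * (1 / (1 / α - 1))) := by
        gcongr n * M * ?_
        exact (mul_le_mul_of_nonneg_left (exp_neg_div_one_sub_exp_neg_le hγ) zero_le_two).trans
          (mul_le_mul_of_nonneg_right (by linarith [add_one_le_exp 1]) (by positivity))
    _ ≤ _ := by
        rw [show exp 1 / (1 / α - 1) * (3 / 2) ^ (1 / α - 1) * n * M
          = n * M * (exp 1 * (1 / (1 / α - 1))) * (3 / 2) ^ (1 / α - 1) by ring]
        exact le_mul_of_one_le_right (by positivity) (one_le_rpow (by norm_num) hγ.le)
end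

section
/- Let 0 < α < 1 and let f : ℝ → ℝ be a C¹ function with bounded derivative and f itself bounded. Then for every δ > 0 and every x ∈ ℝ, the absolute value of the principal-value integral ∫ sgn(x−y) |x−y|^{−(1+α)} (f(x) − f(y)) dy over ℝ is at most (6/α) δ^{−α} ‖f‖_∞ + (2/(α(1−α))) δ^{1−α} ‖f′‖_∞. -/
/-!
No cancellation is needed: the integral converges absolutely. For `|x - y| ≤ δ` the mean value
theorem gives `|f x - f y| ≤ ‖f'‖∞ |x - y|`, and beyond `δ` we use `|f x - f y| ≤ 2 ‖f‖∞`. The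
resulting radial majorant of the integrand integrates to
`2 (‖f'‖∞ δ^(1-α) / (1-α) + 2 ‖f‖∞ δ^(-α) / α)`, which is below the stated bound.
-/

open Real MeasureTheory Set

theorem abs_sub_le_mul_abs_sub_of_abs_deriv_le {f : ℝ → ℝ} (hf : Differentiable ℝ f)
    {C : ℝ} (hC : ∀ x, |deriv f x| ≤ C) (a b : ℝ) : |f a - f b| ≤ C * |a - b| :=
  convex_univ.norm_image_sub_le_of_norm_deriv_le (fun t _ => hf t) (fun t _ => hC t)
    (mem_univ b) (mem_univ a)

theorem integrable_comp_abs_of_integrableOn_Ioi {g : ℝ → ℝ} (hg : IntegrableOn g (Ioi 0)) :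
    Integrable (fun y => g |y|) := by
  have hpos : IntegrableOn (fun y => g |y|) (Ioi 0) :=
    hg.congr_fun (fun t ht => by rw [abs_of_pos ht]) measurableSet_Ioi
  have hneg : IntegrableOn (fun y => g |y|) (Iic 0) := by
    have hneg_emb : MeasurableEmbedding fun y : ℝ => -y :=
      (Homeomorph.neg ℝ).measurableEmbedding
    rw [← Measure.map_neg_eq_self (volume : Measure ℝ), hneg_emb.integrableOn_map_iff]
    simp_rw [Function.comp_def, abs_neg, neg_preimage, neg_Iic, neg_zero]
    exact (integrableOn_Ici_iff_integrableOn_Ioi).2 hpos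
  simpa [Iic_union_Ioi] using hneg.union hpos

noncomputable def kernelMajorant (α δ a b t : ℝ) : ℝ :=
  if t ≤ δ then a * t ^ (-α) else b * t ^ (-(1 + α))

section kernelMajorant

variable {α δ : ℝ} (a b : ℝ)

theorem kernelMajorant_eqOn_Ioc :
    EqOn (kernelMajorant α δ a b) (fun t => a * t ^ (-α)) (Ioc 0 δ) :=
  fun _ ht => if_pos ht.2

theorem kernelMajorant_eqOn_Ioi :
    EqOn (kernelMajorant α δ a b) (fun t => b * t ^ (-(1 + α))) (Ioi δ) :=
  fun _ ht => if_neg (not_le.2 ht)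

theorem integrableOn_Ioc_kernelMajorant (hα1 : α < 1) :
    IntegrableOn (kernelMajorant α δ a b) (Ioc 0 δ) :=
  IntegrableOn.congr_fun
    ((intervalIntegral.intervalIntegrable_rpow' (r := -α) (by linarith)).1.const_mul a)
    (kernelMajorant_eqOn_Ioc a b).symm measurableSet_Ioc

theorem integrableOn_Ioi_kernelMajorant (hα0 : 0 < α) (hδ : 0 < δ) :
    IntegrableOn (kernelMajorant α δ a b) (Ioi δ) :=
  IntegrableOn.congr_fun
    ((integrableOn_Ioi_rpow_of_lt (a := -(1 + α)) (by linarith) hδ).const_mul b)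
    (kernelMajorant_eqOn_Ioi a b).symm measurableSet_Ioi

theorem integrableOn_Ioi_zero_kernelMajorant (hα0 : 0 < α) (hα1 : α < 1) (hδ : 0 < δ) :
    IntegrableOn (kernelMajorant α δ a b) (Ioi 0) := by
  rw [← Ioc_union_Ioi_eq_Ioi hδ.le]
  exact (integrableOn_Ioc_kernelMajorant a b hα1).union
    (integrableOn_Ioi_kernelMajorant a b hα0 hδ)

theorem integral_Ioi_zero_kernelMajorant (hα0 : 0 < α) (hα1 : α < 1) (hδ : 0 < δ) :
    ∫ t in Ioi 0, kernelMajorant α δ a b t =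
      a * (δ ^ (1 - α) / (1 - α)) + b * (δ ^ (-α) / α) := by
  have hnear : ∫ t in Ioc 0 δ, t ^ (-α) = δ ^ (1 - α) / (1 - α) := by
    rw [← intervalIntegral.integral_of_le hδ.le, integral_rpow (Or.inl (by linarith)),
      zero_rpow (by linarith), neg_add_eq_sub]
    ring
  have hfar : ∫ t in Ioi δ, t ^ (-(1 + α)) = δ ^ (-α) / α := by
    rw [integral_Ioi_rpow_of_lt (by linarith) hδ, show -(1 + α) + 1 = -α by ring, neg_div_neg_eq]
  rw [← Ioc_union_Ioi_eq_Ioi hδ.le,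
    setIntegral_union (Ioc_disjoint_Ioi le_rfl) measurableSet_Ioi,
    setIntegral_congr_fun measurableSet_Ioc (kernelMajorant_eqOn_Ioc a b),
    setIntegral_congr_fun measurableSet_Ioi (kernelMajorant_eqOn_Ioi a b),
    integral_const_mul, integral_const_mul, hnear, hfar]
  exacts [integrableOn_Ioc_kernelMajorant a b hα1, integrableOn_Ioi_kernelMajorant a b hα0 hδ]

end kernelMajorant

theorem abs_kernel_mul_sub_le_kernelMajorant {α δ C C' : ℝ} {f : ℝ → ℝ}
    (hf : Differentiable ℝ f) (hC : ∀ x, |f x| ≤ C) (hC' : ∀ x, |deriv f x| ≤ C') (x y : ℝ) :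
    |sign (x - y) * |x - y| ^ (-(1 + α)) * (f x - f y)| ≤
      kernelMajorant α δ C' (2 * C) |x - y| := by
  rcases eq_or_ne x y with rfl | hxy
  · have hC0 : 0 ≤ C := (abs_nonneg _).trans (hC x)
    have hC'0 : 0 ≤ C' := (abs_nonneg _).trans (hC' x)
    simp only [sub_self, mul_zero, abs_zero, kernelMajorant]
    split_ifs <;> positivity
  have hpos : 0 < |x - y| := abs_pos.2 (sub_ne_zero.2 hxy)
  have hsign : |sign (x - y)| = 1 := by
    rcases sign_apply_eq_of_ne_zero _ (sub_ne_zero.2 hxy) with h | h <;> simp [h]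
  rw [abs_mul, abs_mul, hsign, one_mul, abs_of_nonneg (rpow_nonneg hpos.le _), kernelMajorant]
  split_ifs
  · calc |x - y| ^ (-(1 + α)) * |f x - f y| ≤ |x - y| ^ (-(1 + α)) * (C' * |x - y|) := by
          gcongr; exact abs_sub_le_mul_abs_sub_of_abs_deriv_le hf hC' x y
      _ = C' * |x - y| ^ (-α) := by
          rw [show -α = -(1 + α) + 1 by ring, rpow_add_one hpos.ne']; ring
  · calc |x - y| ^ (-(1 + α)) * |f x - f y| ≤ |x - y| ^ (-(1 + α)) * (|f x| + |f y|) := by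
          gcongr; exact abs_sub _ _
      _ ≤ 2 * C * |x - y| ^ (-(1 + α)) := by
          nlinarith [hC x, hC y, rpow_nonneg hpos.le (-(1 + α))]

theorem stmt_1 (α : ℝ) (hα0 : 0 < α) (hα1 : α < 1) (f : ℝ → ℝ)
    (hf : ContDiff ℝ 1 f) (C C' : ℝ)
    (hC : ∀ x, |f x| ≤ C) (hC' : ∀ x, |deriv f x| ≤ C')
    (δ : ℝ) (hδ : 0 < δ) (x : ℝ) :
    |∫ y : ℝ, Real.sign (x - y) * |x - y| ^ (-(1 + α)) * (f x - f y)|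
      ≤ 6 / α * δ ^ (-α) * C + 2 / (α * (1 - α)) * δ ^ (1 - α) * C' := by
  set B := kernelMajorant α δ C' (2 * C)
  have hB : Integrable (fun y => B |x - y|) :=
    (integrable_comp_sub_left (fun y => B |y|) x).2
      (integrable_comp_abs_of_integrableOn_Ioi
        (integrableOn_Ioi_zero_kernelMajorant _ _ hα0 hα1 hδ))
  have hC0 : 0 ≤ C := (abs_nonneg _).trans (hC x)
  have hC'0 : 0 ≤ C' := (abs_nonneg _).trans (hC' x)
  have hδα : 0 ≤ δ ^ (-α) := rpow_nonneg hδ.le _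
  have hδα' : 0 ≤ δ ^ (1 - α) := rpow_nonneg hδ.le _
  calc _ ≤ ∫ y, B |x - y| := by
        rw [← norm_eq_abs]
        refine norm_integral_le_of_norm_le hB (.of_forall fun y => ?_)
        exact abs_kernel_mul_sub_le_kernelMajorant (hf.differentiable one_ne_zero) hC hC' x y
    _ = 2 * (C' * (δ ^ (1 - α) / (1 - α)) + 2 * C * (δ ^ (-α) / α)) := by
      rw [integral_sub_left_eq_self (fun y => B |y|), integral_comp_abs,
        integral_Ioi_zero_kernelMajorant _ _ hα0 hα1 hδ]
    _ ≤ 6 / α * δ ^ (-α) * C + 2 / (α * (1 - α)) * δ ^ (1 - α) * C' := by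
      have h1α : 0 < 1 - α := by linarith
      rw [div_mul_eq_mul_div, div_mul_eq_mul_div, div_mul_eq_mul_div, div_mul_eq_mul_div,
        mul_div_assoc, mul_div_assoc]
      field_simp
      nlinarith [mul_nonneg hC0 hδα, mul_nonneg (mul_nonneg hC'0 hδα') h1α.le]
end
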